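/- For all distinct positive real numbers a and b, L(a,b) < L(I(a,b), L(a,b)) < L(a,b)·(I(a,b) - L(a,b))/(L(a,b) - G(a,b)). -/

import Mathlib

noncomputable def G (a b : ℝ) : ℝ := Real.sqrt (a * b)
noncomputable def L (a b : ℝ) : ℝ := (a - b) / (Real.log a - Real.log b)
noncomputable def I (a b : ℝ) : ℝ := (1 / Real.exp 1) * (a ^ a / b ^ b) ^ (1 / (a - b))

/-!
Write `a = c eˢ`, `b = c e⁻ˢ` with `c = G(a,b)` and `s ≠ 0`; then `L(a,b) = c sinh s / s` and
`I(a,b) = c exp (s coth s - 1)`. Since `L(x,y) = (x - y)/(log x - log y)`, the right inequality is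
equivalent to `L - G < L log (I/L)`, i.e. to `log (sinh s / s) < s (cosh s + 1)/sinh s - 2`, and the
left one is `y < L(x,y)` for `0 < y < x`, applied to `y = L < x = I` (which follows from the former
since `G < L`).
The difference of the two sides of the hyperbolic inequality tends to `0` as `s → 0⁺`, and its
derivative has the sign of `(s + sinh s)(cosh s - 1) - s² sinh s`, whose Maclaurin series
`∑ (4ⁿ - 4n²) s²ⁿ⁺¹/(2n+1)!` (over `n ≥ 1`) has nonnegative coefficients.
-/

open Real Filter Topology Nat Set

lemma hasSum_sq_mul_sinh (x : ℝ) :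
    HasSum (fun n : ℕ => ((2 * n + 1) * (2 * n) : ℝ) * (x ^ (2 * n + 1) / (2 * n + 1)!))
      (x ^ 2 * sinh x) := by
  rw [← hasSum_nat_add_iff' 1]
  simp only [Finset.range_one, Finset.sum_singleton]
  norm_num
  refine ((hasSum_sinh x).mul_left (x ^ 2)).congr_fun fun n => ?_
  rw [show 2 * (n + 1) + 1 = 2 * n + 1 + 1 + 1 by ring, Nat.factorial_succ, Nat.factorial_succ]
  push_cast
  field_simp
  ring

lemma hasSum_add_sinh_mul_cosh_sub_one_sub_sq_mul_sinh (x : ℝ) :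
    HasSum (fun n : ℕ => (if n = 0 then 0 else (4 : ℝ) ^ n - 4 * n ^ 2) *
      (x ^ (2 * n + 1) / (2 * n + 1)!)) ((x + sinh x) * (cosh x - 1) - x ^ 2 * sinh x) := by
  have h := (((((hasSum_cosh x).mul_left x).sub (hasSum_ite_eq 0 x)).add
    ((hasSum_sinh (2 * x)).div_const 2)).sub (hasSum_sinh x)).sub (hasSum_sq_mul_sinh x)
  rw [show (x + sinh x) * (cosh x - 1) - x ^ 2 * sinh x
    = x * cosh x - x + sinh (2 * x) / 2 - sinh x - x ^ 2 * sinh x by rw [sinh_two_mul]; ring]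
  refine h.congr_fun fun n => ?_
  rcases n with _ | n
  · simp
  · simp only [Nat.add_eq_zero_iff, one_ne_zero, and_false, if_false,
      Nat.factorial_succ (2 * (n + 1))]
    push_cast
    rw [mul_pow, pow_succ (2 : ℝ), pow_mul (2 : ℝ), show (2 : ℝ) ^ 2 = 4 by norm_num]
    field_simp
    ring

lemma sq_mul_sinh_lt_add_sinh_mul_cosh_sub_one {x : ℝ} (hx : 0 < x) :
    x ^ 2 * sinh x < (x + sinh x) * (cosh x - 1) := by
  have hcoeff (n : ℕ) : 0 ≤ (if n = 0 then 0 else (4 : ℝ) ^ n - 4 * n ^ 2) := by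
    rcases n with _ | n
    · simp
    · have h2 : (n : ℝ) + 1 ≤ 2 ^ n := by exact_mod_cast Nat.lt_two_pow_self
      have h4 : (4 : ℝ) ^ n = (2 ^ n) ^ 2 := by rw [← pow_mul, mul_comm, pow_mul]; norm_num
      simp only [Nat.add_eq_zero_iff, one_ne_zero, and_false, if_false]
      push_cast
      rw [pow_succ, h4]
      nlinarith
  have := hasSum_lt (i := 3) (fun n => mul_nonneg (hcoeff n) (by positivity))
    (by norm_num; positivity) hasSum_zero (hasSum_add_sinh_mul_cosh_sub_one_sub_sq_mul_sinh x)
  linarith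

lemma hasDerivAt_mul_cosh_add_one_div_sinh_sub_log_sinh_div {s : ℝ} (hs : 0 < s) :
    HasDerivAt (fun s => s * (cosh s + 1) / sinh s - log (sinh s / s))
      (((s + sinh s) * (cosh s - 1) - s ^ 2 * sinh s) * (cosh s + 1) / (s * sinh s ^ 3)) s := by
  have hsinh : sinh s ≠ 0 := (sinh_pos_iff.2 hs).ne'
  have h := ((((hasDerivAt_id s).mul ((hasDerivAt_cosh s).add_const 1)).div (hasDerivAt_sinh s)
    hsinh).sub (((hasDerivAt_sinh s).div (hasDerivAt_id s) hs.ne').log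
      (div_ne_zero hsinh hs.ne')))
  refine h.congr_deriv ?_
  simp only [Pi.mul_apply, Pi.div_apply, id]
  field_simp
  linear_combination -(s ^ 2 * sinh s + s + sinh s) * cosh_sq s

lemma StrictMonoOn.lt_of_tendsto_nhdsGT {f : ℝ → ℝ} {a l x : ℝ} (hf : StrictMonoOn f (Ioi a))
    (hlim : Tendsto f (𝓝[>] a) (𝓝 l)) (hx : a < x) : l < f x := by
  have hm : a < (a + x) / 2 := by linarith
  have hle : l ≤ f ((a + x) / 2) := by
    refine le_of_tendsto hlim ?_
    filter_upwards [Ioo_mem_nhdsGT hm] with y hy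
    exact (hf hy.1 hm hy.2).le
  exact hle.trans_lt (hf hm (hm.trans (by linarith)) (by linarith))

lemma tendsto_sinh_div_self_nhdsGT_zero : Tendsto (fun x => sinh x / x) (𝓝[>] 0) (𝓝 1) := by
  simpa [div_eq_inv_mul] using (hasDerivAt_sinh 0).tendsto_slope_zero_right

lemma strictMonoOn_mul_cosh_add_one_div_sinh_sub_log_sinh_div :
    StrictMonoOn (fun s => s * (cosh s + 1) / sinh s - log (sinh s / s)) (Ioi 0) := by
  refine strictMonoOn_of_deriv_pos (convex_Ioi 0)
    (fun s hs => (hasDerivAt_mul_cosh_add_one_div_sinh_sub_log_sinh_div hs).continuousAt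
      |>.continuousWithinAt) fun s hs => ?_
  rw [interior_Ioi] at hs
  rw [(hasDerivAt_mul_cosh_add_one_div_sinh_sub_log_sinh_div hs).deriv]
  have hsinh := sinh_pos_iff.2 hs
  have hkey := sq_mul_sinh_lt_add_sinh_mul_cosh_sub_one hs
  have hcosh := one_le_cosh s
  exact div_pos (mul_pos (by linarith) (by linarith)) (mul_pos hs (pow_pos hsinh 3))

lemma tendsto_mul_cosh_add_one_div_sinh_sub_log_sinh_div :
    Tendsto (fun s => s * (cosh s + 1) / sinh s - log (sinh s / s)) (𝓝[>] 0) (𝓝 2) := by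
  have hsinh := tendsto_sinh_div_self_nhdsGT_zero
  have hcosh : Tendsto (fun s => cosh s + 1) (𝓝[>] 0) (𝓝 2) := by
    simpa [one_add_one_eq_two] using
      ((continuous_cosh.tendsto 0).add_const 1).mono_left nhdsWithin_le_nhds
  have := (hcosh.div hsinh one_ne_zero).sub (hsinh.log one_ne_zero)
  simp only [div_one, log_one, sub_zero] at this
  refine this.congr' (eventually_nhdsWithin_of_forall fun s (hs : 0 < s) => ?_)
  simp only [Pi.div_apply]
  field_simp

lemma log_sinh_div_self_lt {s : ℝ} (hs : s ≠ 0) :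
    log (sinh s / s) < s * (cosh s + 1) / sinh s - 2 := by
  -- both sides are even in `s`
  wlog hpos : 0 < s generalizing s
  · have := this (neg_ne_zero.2 hs) (neg_pos.2 (lt_of_le_of_ne (not_lt.1 hpos) hs))
    simpa [neg_div_neg_eq] using this
  have := strictMonoOn_mul_cosh_add_one_div_sinh_sub_log_sinh_div.lt_of_tendsto_nhdsGT
    tendsto_mul_cosh_add_one_div_sinh_sub_log_sinh_div hpos
  linarith

lemma one_lt_sinh_div_self {s : ℝ} (hs : s ≠ 0) : 1 < sinh s / s := by
  rcases hs.lt_or_gt with hs | hs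
  · exact (one_lt_div_of_neg hs).2 (sinh_lt_self_iff.2 hs)
  · exact (one_lt_div hs).2 (self_lt_sinh_iff.2 hs)

lemma I_eq_exp {a b : ℝ} (ha : 0 < a) (hb : 0 < b) :
    I a b = exp ((a * log a - b * log b) / (a - b) - 1) := by
  rw [I, rpow_def_of_pos ha, rpow_def_of_pos hb, ← exp_sub, ← exp_mul, one_div (exp 1),
    ← exp_neg, ← exp_add]
  congr 1
  ring

lemma exists_eq_mul_exp {a b : ℝ} (ha : 0 < a) (hb : 0 < b) :
    ∃ c s, 0 < c ∧ a = c * exp s ∧ b = c * exp (-s) := by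
  refine ⟨exp ((log a + log b) / 2), (log a - log b) / 2, exp_pos _, ?_, ?_⟩ <;>
  · rw [← exp_add]
    ring_nf
    rw [exp_log (by assumption)]

lemma G_mul_exp {c : ℝ} (hc : 0 < c) (s : ℝ) : G (c * exp s) (c * exp (-s)) = c := by
  rw [G, mul_mul_mul_comm, ← exp_add, add_neg_cancel, exp_zero, mul_one, sqrt_mul_self hc.le]

lemma log_mul_exp {c : ℝ} (hc : 0 < c) (s : ℝ) : log (c * exp s) = log c + s := by
  rw [log_mul hc.ne' (exp_pos s).ne', log_exp]

lemma L_mul_exp {c : ℝ} (hc : 0 < c) (s : ℝ) : L (c * exp s) (c * exp (-s)) = c * (sinh s / s) := by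
  rw [L, log_mul_exp hc s, log_mul_exp hc (-s), sinh_eq]
  ring

lemma I_mul_exp {c s : ℝ} (hc : 0 < c) (hs : s ≠ 0) :
    I (c * exp s) (c * exp (-s)) = c * exp (s * cosh s / sinh s - 1) := by
  have hsub : c * exp s - c * exp (-s) = 2 * c * sinh s := by rw [sinh_eq]; ring
  have hsinh : sinh s ≠ 0 := sinh_ne_zero.2 hs
  have hsub_ne : c * exp s - c * exp (-s) ≠ 0 := by
    rw [hsub]; exact mul_ne_zero (by positivity) hsinh
  have hexponent : (c * exp s * (log c + s) - c * exp (-s) * (log c + -s)) /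
      (c * exp s - c * exp (-s)) = log c + s * cosh s / sinh s := by
    rw [div_eq_iff hsub_ne, hsub]
    field_simp
    rw [cosh_eq, sinh_eq]
    ring
  rw [I_eq_exp (by positivity) (by positivity), log_mul_exp hc s, log_mul_exp hc (-s), hexponent,
    add_sub_assoc, exp_add, exp_log hc]

lemma G_lt_L {a b : ℝ} (ha : 0 < a) (hb : 0 < b) (hab : a ≠ b) : G a b < L a b := by
  obtain ⟨c, s, hc, rfl, rfl⟩ := exists_eq_mul_exp ha hb
  have hs : s ≠ 0 := by rintro rfl; simp at hab
  rw [G_mul_exp hc s, L_mul_exp hc s]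
  exact lt_mul_of_one_lt_right hc (one_lt_sinh_div_self hs)

lemma one_sub_G_div_L_lt_log_I_sub_log_L {a b : ℝ} (ha : 0 < a) (hb : 0 < b) (hab : a ≠ b) :
    1 - G a b / L a b < log (I a b) - log (L a b) := by
  obtain ⟨c, s, hc, rfl, rfl⟩ := exists_eq_mul_exp ha hb
  have hs : s ≠ 0 := by rintro rfl; simp at hab
  have hsinh : sinh s ≠ 0 := sinh_ne_zero.2 hs
  have hu : 0 < sinh s / s := one_pos.trans (one_lt_sinh_div_self hs)
  rw [G_mul_exp hc s, L_mul_exp hc s, I_mul_exp hc hs, log_mul hc.ne' hu.ne',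
    log_mul hc.ne' (exp_pos _).ne', log_exp]
  have key := log_sinh_div_self_lt hs
  have : s * (cosh s + 1) / sinh s = s * cosh s / sinh s + (sinh s / s)⁻¹ := by
    field_simp
  rw [div_mul_cancel_left₀ hc.ne']
  linarith

lemma lt_L_of_lt {x y : ℝ} (hy : 0 < y) (hyx : y < x) : y < L x y := by
  have hd : 0 < log x - log y := sub_pos.2 (log_lt_log hy hyx)
  rw [L, lt_div_iff₀ hd, ← log_div (hy.trans hyx).ne' hy.ne']
  have := log_lt_sub_one_of_pos (div_pos (hy.trans hyx) hy) (div_ne_one_of_ne hyx.ne')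
  rw [lt_sub_iff_add_lt, lt_div_iff₀ hy] at this
  linarith

lemma L_lt_mul_sub_div_sub {g l i : ℝ} (hl : 0 < l) (hi : 0 < i) (hgl : g < l)
    (h : 1 - g / l < log i - log l) : L i l < l * (i - l) / (l - g) := by
  have hd : 0 < log i - log l := (sub_pos.2 ((div_lt_one hl).2 hgl)).trans h
  have hli : 0 < i - l := sub_pos.2 ((log_lt_log_iff hl hi).1 (sub_pos.1 hd))
  have hgap : l - g < l * (log i - log l) :=
    calc l - g = l * (1 - g / l) := by field_simp
      _ < l * (log i - log l) := mul_lt_mul_of_pos_left h hl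
  rw [L, div_lt_div_iff₀ hd (sub_pos.2 hgl)]
  have := mul_lt_mul_of_pos_left hgap hli
  linarith

theorem stmt_7 (a b : ℝ) (ha : 0 < a) (hb : 0 < b) (hab : a ≠ b) :
    L a b < L (I a b) (L a b) ∧
    L (I a b) (L a b) < L a b * (I a b - L a b) / (L a b - G a b) := by
  have hGL := G_lt_L ha hb hab
  have hkey := one_sub_G_div_L_lt_log_I_sub_log_L ha hb hab
  have hL : 0 < L a b := (sqrt_pos.2 (mul_pos ha hb)).trans hGL
  have hI : 0 < I a b := by rw [I_eq_exp ha hb]; exact exp_pos _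
  have hLI : L a b < I a b := by
    rw [← log_lt_log_iff hL hI, ← sub_pos]
    exact (sub_pos.2 ((div_lt_one hL).2 hGL)).trans hkey
  exact ⟨lt_L_of_lt hL hLI, L_lt_mul_sub_div_sub hL hI hGL hkey⟩
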